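/- For integers k ≥ 1, ℓ ≥ 1, any integer s, and any 0 ≤ p ≤ ℓ−1, the monomial M_p = T_{k,ℓ-1,0}^{(s)} · T_{k-1,ℓ,0}^{(s+4)} · ∏_{j=1}^{p} A_{2,s+4k+2ℓ-2j}^{-1} is dominant (all exponents nonnegative), and these ℓ monomials M₀, …, M_{ℓ−1} are pairwise distinct. -/

import Mathlib

/-- Monomials of type `C₃`: finitely supported exponent functions on `{1,2,3} × ℤ`. -/
abbrev Mon : Type := (Fin 3 × ℤ) →₀ ℤ

/-- The generator `Y_{i,s}` (index `i : Fin 3` stands for `i+1 ∈ {1,2,3}`). -/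
noncomputable def Y (i : Fin 3) (s : ℤ) : Mon := Finsupp.single (i, s) 1

/-- The elements `A_{i,s}` of type `C₃` (written additively on exponents). -/
noncomputable def A : Fin 3 → ℤ → Mon
  | 0, s => Y 0 (s + 1) + Y 0 (s - 1) - Y 1 s
  | 1, s => Y 1 (s + 1) + Y 1 (s - 1) - Y 0 s - Y 2 s
  | 2, s => Y 2 (s + 2) + Y 2 (s - 2) - Y 1 (s + 1) - Y 1 (s - 1)

/-- Right-negativity. -/
def RightNegative (u : Mon) : Prop :=
  ∀ (i : Fin 3) (s : ℤ), u (i, s) ≠ 0 → (∀ (j : Fin 3) (t : ℤ), s < t → u (j, t) = 0) →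
    u (i, s) < 0

/-- Dominance: all exponents nonnegative. -/
def Dominant (u : Mon) : Prop := ∀ p : Fin 3 × ℤ, 0 ≤ u p

/-- The highest `l`-weight `T_{k,ℓ,m}^{(s)} = (∏ 3_{s+4i})(∏ 2_{s+4k+2i+1})(∏ 1_{s+4k+2ℓ+2i+2})`.
Here `Y 2`, `Y 1`, `Y 0` stand for the variables with node index `3`, `2`, `1`. -/
noncomputable def T (k l m : ℕ) (s : ℤ) : Mon :=
  (∑ i ∈ Finset.range k, Y 2 (s + 4 * i)) +
  (∑ i ∈ Finset.range l, Y 1 (s + 4 * k + 2 * i + 1)) +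
  (∑ i ∈ Finset.range m, Y 0 (s + 4 * k + 2 * l + 2 * i + 2))

/-- `M_p = T_{k,ℓ-1,0}^{(s)} T_{k-1,ℓ,0}^{(s+4)} ∏_{j=1}^{p} A_{2,s+4k+2ℓ-2j}^{-1}`. -/
noncomputable def M (k l : ℕ) (s : ℤ) (p : ℕ) : Mon :=
  T k (l - 1) 0 s + T (k - 1) l 0 (s + 4) -
    ∑ j ∈ Finset.Icc 1 p, A 1 (s + 4 * k + 2 * l - 2 * j)

/-!
Put `c = s + 4k + 2ℓ`. The Y-factors of node 2 in the two `T`'s are `Y_{2,c-2j-1}` (`1 ≤ j ≤ ℓ-1`)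
and `Y_{2,c-2j+1}` (`1 ≤ j ≤ ℓ`), and `A_{2,c-2j}⁻¹` for `j ≤ p` cancels exactly one of each while
contributing `Y_{1,c-2j} Y_{3,c-2j}`. So for `p ≤ ℓ-1` the monomial `M_p` is a product of `Y`'s, hence
dominant. Each `A_{2,t}⁻¹` raises the total exponent of the variables of node 1 by one, so this
part of the weight of `M_p` equals `p`, and the `M_p` are distinct.
-/

open Finset

lemma sum_range_eq_sum_Icc_sub {G : Type*} [AddCommMonoid G] (f : ℕ → G) (n : ℕ) :
    ∑ i ∈ range n, f i = ∑ j ∈ Icc 1 n, f (n - j) := by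
  rw [← Ico_succ_right_eq_Icc, Order.succ_eq_add_one, sum_Ico_reflect f 1 le_rfl,
    Nat.sub_self, Nat.Ico_zero_eq_range, Nat.add_sub_cancel]

lemma sum_Icc_one_eq_add_sum_Ioc {G : Type*} [AddCommMonoid G] (f : ℕ → G) {p n : ℕ}
    (hp : p ≤ n) : ∑ j ∈ Icc 1 n, f j = ∑ j ∈ Icc 1 p, f j + ∑ j ∈ Ioc p n, f j := by
  have hIcc (m : ℕ) : Icc 1 m = Ioc 0 m := Icc_succ_left_eq_Ioc 0 m
  rw [hIcc, hIcc, sum_Ioc_consecutive f p.zero_le hp]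

lemma dominant_iff_nonneg (u : Mon) : Dominant u ↔ 0 ≤ u := Iff.rfl

lemma Y_nonneg (i : Fin 3) (t : ℤ) : 0 ≤ Y i t := Finsupp.single_nonneg.2 zero_le_one

lemma T_eq_sum_Icc (k n : ℕ) (s : ℤ) :
    T k n 0 s =
      ∑ i ∈ range k, Y 2 (s + 4 * i) + ∑ j ∈ Icc 1 n, Y 1 (s + 4 * k + 2 * n - 2 * j + 1) := by
  rw [T, range_zero, sum_empty, add_zero, sum_range_eq_sum_Icc_sub _ n]
  congr 1
  refine sum_congr rfl fun j hj => ?_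
  rw [mem_Icc] at hj
  congr 1
  omega

noncomputable def weight : Mon →+ (Fin 3 →₀ ℤ) := Finsupp.mapDomain.addMonoidHom Prod.fst

lemma weight_Y (i : Fin 3) (t : ℤ) : weight (Y i t) = Finsupp.single i 1 := Finsupp.mapDomain_single

lemma weight_A_one (t : ℤ) :
    weight (A 1 t) = Finsupp.single 1 2 - Finsupp.single 0 1 - Finsupp.single 2 1 := by
  simp [A, weight_Y, ← Finsupp.single_add]

lemma weight_M (k l : ℕ) (s : ℤ) (p : ℕ) :
    weight (M k l s p) =
      weight (M k l s 0) - p • (Finsupp.single 1 2 - Finsupp.single 0 1 - Finsupp.single 2 1) := by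
  simp only [M, map_sub, map_sum, weight_A_one, sum_const, Nat.card_Icc, Nat.add_sub_cancel,
    Icc_eq_empty_of_lt one_pos, sum_empty, sub_zero]

lemma M_injective (k l : ℕ) (s : ℤ) : Function.Injective (M k l s) := by
  intro p q h
  have h0 := congrArg (fun u => weight u 0) h
  simp only [weight_M k l s p, weight_M k l s q] at h0
  simpa using h0

lemma M_eq_sum_Y (k l : ℕ) (s : ℤ) {p : ℕ} (hk : 1 ≤ k) (hp : p ≤ l - 1) :
    M k l s p = ∑ i ∈ range k, Y 2 (s + 4 * i) + ∑ i ∈ range (k - 1), Y 2 (s + 4 + 4 * i) +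
      ∑ j ∈ Ioc p (l - 1), Y 1 (s + 4 * k + 2 * l - 2 * j - 1) +
      ∑ j ∈ Ioc p l, Y 1 (s + 4 * k + 2 * l - 2 * j + 1) +
      ∑ j ∈ Icc 1 p, (Y 0 (s + 4 * k + 2 * l - 2 * j) + Y 2 (s + 4 * k + 2 * l - 2 * j)) := by
  have hT₁ : T k (l - 1) 0 s = ∑ i ∈ range k, Y 2 (s + 4 * i) +
      ∑ j ∈ Icc 1 (l - 1), Y 1 (s + 4 * k + 2 * l - 2 * j - 1) := by
    rw [T_eq_sum_Icc]
    congr 1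
    refine sum_congr rfl fun j hj => ?_
    rw [mem_Icc] at hj
    congr 1
    omega
  have hT₂ : T (k - 1) l 0 (s + 4) = ∑ i ∈ range (k - 1), Y 2 (s + 4 + 4 * i) +
      ∑ j ∈ Icc 1 l, Y 1 (s + 4 * k + 2 * l - 2 * j + 1) := by
    rw [T_eq_sum_Icc]
    congr 1
    refine sum_congr rfl fun j _ => ?_
    congr 1
    omega
  rw [M, hT₁, hT₂, sum_Icc_one_eq_add_sum_Ioc _ hp,
    sum_Icc_one_eq_add_sum_Ioc _ (hp.trans (l.sub_le 1))]
  simp only [A, sum_sub_distrib, sum_add_distrib]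
  abel

lemma M_dominant (k l : ℕ) (s : ℤ) {p : ℕ} (hk : 1 ≤ k) (hp : p ≤ l - 1) :
    Dominant (M k l s p) := by
  rw [dominant_iff_nonneg, M_eq_sum_Y k l s hk hp]
  refine add_nonneg (add_nonneg (add_nonneg (add_nonneg ?_ ?_) ?_) ?_)
    (sum_nonneg fun _ _ => add_nonneg (Y_nonneg _ _) (Y_nonneg _ _))
  all_goals exact sum_nonneg fun _ _ => Y_nonneg _ _

theorem M_dominant_and_distinct_general (k l : ℕ) (hk : 1 ≤ k) (s : ℤ) :
    (∀ p ≤ l - 1, Dominant (M k l s p)) ∧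
    (∀ p ≤ l - 1, ∀ q ≤ l - 1, M k l s p = M k l s q → p = q) :=
  ⟨fun _ hp => M_dominant k l s hk hp, fun _ _ _ _ h => M_injective k l s h⟩

/-- For `0 ≤ p ≤ ℓ-1` the monomials `M_p` are dominant and pairwise distinct. -/
theorem M_dominant_and_distinct (k l : ℕ) (hk : 1 ≤ k) (hl : 1 ≤ l) (s : ℤ) :
    (∀ p ≤ l - 1, Dominant (M k l s p)) ∧
    (∀ p ≤ l - 1, ∀ q ≤ l - 1, M k l s p = M k l s q → p = q) :=
  M_dominant_and_distinct_general k l hk s
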